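/- arXiv:1107.1206 — 2 statements merged into one kernel-verified Lean document; each statement's English description precedes it below -/
import Mathlib

section
/- Let (S, Act, D) be a probabilistic automaton. A relation R is a 0-simulation (ε-simulation with ε = 0) if and only if R is a classical probabilistic simulation: whenever s R t and (s, a, μ) ∈ D, there exists (t, a, ν) ∈ D and a weight function δ : S × S → [0,1] with δ(x,y) > 0 → x R y, ∑_y δ(x,y) = μ(x) for all x (assuming S finite), ∑_x δ(x,y) ≤ ν(y) for all y. -/
open Finset

noncomputable def mass {S : Type*} [Fintype S] (μ : S → ℝ) (E : Set S) : ℝ :=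
  ∑ s, Set.indicator E μ s

def relImage {S T : Type*} (R : S → T → Prop) (E : Set S) : Set T :=
  {y | ∃ x ∈ E, R x y}

def IsSubdist {S : Type*} [Fintype S] (μ : S → ℝ) : Prop :=
  (∀ s, 0 ≤ μ s) ∧ ∑ s, μ s ≤ 1

def Lift {S : Type*} [Fintype S] (ε : ℝ) (R : S → S → Prop) (μ ν : S → ℝ) : Prop :=
  ∀ E : Set S, mass μ E ≤ mass ν (relImage R E) + ε

def IsEpsSim {S Act : Type*} [Fintype S] (D : S → Act → (S → ℝ) → Prop) (ε : ℝ)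
    (R : S → S → Prop) : Prop :=
  ∀ s t, R s t → ∀ a μ, D s a μ → ∃ ν, D t a ν ∧ Lift ε R μ ν

/-!
Direction "weights ⇒ lifting" is a double counting: the mass `μ E` flows along `δ` into `R E`,
where it is bounded by `ν (R E)`.

For the converse, take a sub-coupling `δ` of `μ` and `ν` supported on `R` with maximal total
mass (it exists by compactness) and suppose some row `x₀` is not saturated. Let `A` be the set
of states reachable from `x₀` by alternating paths, which step forward along `R` and back along
the support of `δ`. If a column in `R A` had slack, shifting mass along such a path would
increase the total mass of `δ`; hence every column of `R A` is saturated, and all the mass it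
receives comes from `A`. So `ν (R A) ≤ ∑_{x ∈ A} ∑_y δ x y < μ A`, contradicting the lifting
condition at `A`.
-/

open Relation

section

variable {S : Type*} [Fintype S]

lemma mass_eq_sum_filter (μ : S → ℝ) (E : Set S) [DecidablePred (· ∈ E)] :
    mass μ E = ∑ x with x ∈ E, μ x :=
  sum_indicator_eq_sum_filter univ (fun _ => μ) (fun _ => E) id

lemma IsSubdist.le_one {μ : S → ℝ} (hμ : IsSubdist μ) (x : S) : μ x ≤ 1 :=
  (single_le_sum (fun s _ => hμ.1 s) (mem_univ x)).trans hμ.2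

lemma Matrix.sum_row_single {m n α : Type*} [DecidableEq m] [DecidableEq n] [Fintype n]
    [AddCommMonoid α] (i : m) (j : n) (c : α) (k : m) :
    ∑ l, Matrix.single i j c k l = if i = k then c else 0 := by
  simp [Matrix.single_apply, ite_and]

lemma Matrix.sum_col_single {m n α : Type*} [DecidableEq m] [DecidableEq n] [Fintype m]
    [AddCommMonoid α] (i : m) (j : n) (c : α) (l : n) :
    ∑ k, Matrix.single i j c k l = if j = l then c else 0 := by
  simp [Matrix.single_apply, ite_and]

structure IsSubcoupling (R : S → S → Prop) (μ ν : S → ℝ) (δ : S → S → ℝ) : Prop where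
  nonneg : ∀ x y, 0 ≤ δ x y
  rel_of_pos : ∀ x y, 0 < δ x y → R x y
  rowSum_le : ∀ x, ∑ y, δ x y ≤ μ x
  colSum_le : ∀ y, ∑ x, δ x y ≤ ν y

def AlternatingStep (R : S → S → Prop) (δ : S → S → ℝ) (x' x : S) : Prop :=
  ∃ y, R x' y ∧ 0 < δ x y

namespace IsSubcoupling

variable {R : S → S → Prop} {μ ν : S → ℝ} {δ : S → S → ℝ}

lemma le_left (hδ : IsSubcoupling R μ ν δ) (x y : S) : δ x y ≤ μ x :=
  (single_le_sum (fun q _ => hδ.nonneg x q) (mem_univ y)).trans (hδ.rowSum_le x)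

lemma lift_zero (hδ : IsSubcoupling R μ ν δ) (hrow : ∀ x, ∑ y, δ x y = μ x) :
    Lift 0 R μ ν := by
  classical
  intro E
  rw [mass_eq_sum_filter, mass_eq_sum_filter, add_zero]
  have hvanish : ∀ x ∈ E, ∀ y ∉ relImage R E, δ x y = 0 := fun x hx y hy =>
    le_antisymm (not_lt.1 fun hpos => hy ⟨x, hx, hδ.rel_of_pos x y hpos⟩) (hδ.nonneg x y)
  calc ∑ x with x ∈ E, μ x
      = ∑ x with x ∈ E, ∑ y with y ∈ relImage R E, δ x y := by
        refine sum_congr rfl fun x hx => ?_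
        rw [← hrow x, sum_filter_of_ne fun y _ h => ?_]
        by_contra hy
        exact h (hvanish x (mem_filter.1 hx).2 y hy)
    _ = ∑ y with y ∈ relImage R E, ∑ x with x ∈ E, δ x y := sum_comm
    _ ≤ ∑ y with y ∈ relImage R E, ∑ x, δ x y :=
        sum_le_sum fun y _ => sum_le_sum_of_subset_of_nonneg (subset_univ _)
          fun x _ _ => hδ.nonneg x y
    _ ≤ ∑ y with y ∈ relImage R E, ν y := sum_le_sum fun y _ => hδ.colSum_le y

lemma exists_sum_lt (hδ : IsSubcoupling R μ ν δ) {x y : S} (hxy : R x y)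
    (hrow : ∑ q, δ x q < μ x) (hcol : ∑ p, δ p y < ν y) :
    ∃ δ', IsSubcoupling R μ ν δ' ∧ ∑ p, ∑ q, δ p q < ∑ p, ∑ q, δ' p q := by
  classical
  set ε := min (μ x - ∑ q, δ x q) (ν y - ∑ p, δ p y)
  have hε : 0 < ε := lt_min (sub_pos.2 hrow) (sub_pos.2 hcol)
  set δ' : S → S → ℝ := fun p q => δ p q + Matrix.single x y ε p q
  have hval : ∀ p q, δ' p q = δ p q + if x = p ∧ y = q then ε else 0 := fun p q => rfl
  have hrow' : ∀ p, ∑ q, δ' p q = ∑ q, δ p q + if x = p then ε else 0 := fun p => by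
    rw [sum_add_distrib, Matrix.sum_row_single]
  have hcol' : ∀ q, ∑ p, δ' p q = ∑ p, δ p q + if y = q then ε else 0 := fun q => by
    rw [sum_add_distrib, Matrix.sum_col_single]
  refine ⟨δ', ⟨fun p q => ?_, fun p q hpos => ?_, fun p => ?_, fun q => ?_⟩, ?_⟩
  · have := hδ.nonneg p q
    rw [hval]; split_ifs <;> linarith
  · rw [hval] at hpos
    split_ifs at hpos with h
    · exact h.1 ▸ h.2 ▸ hxy
    · exact hδ.rel_of_pos p q (by linarith)
  · rw [hrow']
    split_ifs with h
    · subst h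
      linarith [min_le_left (μ x - ∑ q, δ x q) (ν y - ∑ p, δ p y)]
    · simpa using hδ.rowSum_le p
  · rw [hcol']
    split_ifs with h
    · subst h
      linarith [min_le_right (μ x - ∑ q, δ x q) (ν y - ∑ p, δ p y)]
    · simpa using hδ.colSum_le q
  · simp only [hrow', sum_add_distrib, sum_ite_eq, mem_univ, if_true]
    linarith

lemma exists_exchange (hδ : IsSubcoupling R μ ν δ) {x y y' : S} (hxy : R x y)
    (hcol : ∑ p, δ p y < ν y) (hpos : 0 < δ x y') (hne : y' ≠ y) :
    ∃ δ', IsSubcoupling R μ ν δ' ∧ (∀ p q, 0 < δ p q → 0 < δ' p q) ∧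
      (∀ p, ∑ q, δ' p q = ∑ q, δ p q) ∧ ∑ p, δ' p y' < ν y' := by
  classical
  -- `ε < δ x y'` keeps the support of `δ`, so alternating paths through `(x, y')` survive.
  set ε := min (δ x y') (ν y - ∑ p, δ p y) / 2
  have hε : 0 < ε := half_pos (lt_min hpos (sub_pos.2 hcol))
  have hε₁ : ε < δ x y' :=
    (half_lt_self (lt_min hpos (sub_pos.2 hcol))).trans_le (min_le_left _ _)
  have hε₂ : ε ≤ ν y - ∑ p, δ p y :=
    (half_le_self (lt_min hpos (sub_pos.2 hcol)).le).trans (min_le_right _ _)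
  set δ' : S → S → ℝ := fun p q => δ p q + Matrix.single x y ε p q - Matrix.single x y' ε p q
  have hval : ∀ p q, δ' p q =
      δ p q + (if x = p ∧ y = q then ε else 0) - (if x = p ∧ y' = q then ε else 0) :=
    fun p q => rfl
  have hrow' : ∀ p, ∑ q, δ' p q = ∑ q, δ p q := fun p => by
    rw [sum_sub_distrib, sum_add_distrib, Matrix.sum_row_single, Matrix.sum_row_single,
      add_sub_cancel_right]
  have hcol' : ∀ q, ∑ p, δ' p q =
      ∑ p, δ p q + (if y = q then ε else 0) - if y' = q then ε else 0 := fun q => by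
    rw [sum_sub_distrib, sum_add_distrib, Matrix.sum_col_single, Matrix.sum_col_single]
  have hpres : ∀ p q, 0 < δ p q → 0 < δ' p q := fun p q h => by
    rw [hval]; split_ifs <;> grind
  refine ⟨δ', ⟨fun p q => ?_, fun p q h => ?_, fun p => ?_, fun q => ?_⟩, hpres, hrow', ?_⟩
  · have := hδ.nonneg p q
    rw [hval]; split_ifs <;> grind
  · rw [hval] at h
    split_ifs at h with h₁ h₂
    · grind
    · exact h₁.1 ▸ h₁.2 ▸ hxy
    · exact hδ.rel_of_pos p q (by linarith [hδ.nonneg p q])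
    · exact hδ.rel_of_pos p q (by linarith)
  · exact hrow' p ▸ hδ.rowSum_le p
  · have := hδ.colSum_le q
    rw [hcol']; split_ifs <;> grind
  · rw [hcol', if_neg hne.symm, if_pos rfl]
    linarith [hδ.colSum_le y']

lemma exists_sum_lt_of_reflTransGen {δ₀ : S → S → ℝ} {x₀ x : S}
    (hx : ReflTransGen (AlternatingStep R δ₀) x₀ x) {y : S} (hδ : IsSubcoupling R μ ν δ)
    (hsupp : ∀ p q, 0 < δ₀ p q → 0 < δ p q) (hrow : ∑ q, δ x₀ q < μ x₀) (hxy : R x y)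
    (hcol : ∑ p, δ p y < ν y) :
    ∃ δ', IsSubcoupling R μ ν δ' ∧ ∑ p, ∑ q, δ p q < ∑ p, ∑ q, δ' p q := by
  -- The path lives in the support of the fixed `δ₀`, which exchanges only enlarge.
  induction hx generalizing δ y with
  | refl => exact hδ.exists_sum_lt hxy hrow hcol
  | tail _ hstep ih =>
    obtain ⟨y', hxy', hpos⟩ := hstep
    by_cases hy : y' = y
    · subst hy
      exact ih hδ hsupp hrow hxy' hcol
    obtain ⟨δ', hδ', hsupp', hrow', hcol'⟩ := hδ.exists_exchange hxy hcol (hsupp _ _ hpos) hy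
    obtain ⟨δ'', hδ'', hlt⟩ :=
      ih hδ' (fun p q h => hsupp' p q (hsupp p q h)) (hrow' x₀ ▸ hrow) hxy' hcol'
    exact ⟨δ'', hδ'', by simpa only [hrow'] using hlt⟩

lemma rowSum_eq_of_isMaxOn (hδ : IsSubcoupling R μ ν δ)
    (hmax : IsMaxOn (fun δ => ∑ p, ∑ q, δ p q) {δ | IsSubcoupling R μ ν δ} δ)
    (hL : Lift 0 R μ ν) (x₀ : S) : ∑ y, δ x₀ y = μ x₀ := by
  classical
  by_contra hne
  have hrow : ∑ y, δ x₀ y < μ x₀ := (hδ.rowSum_le x₀).lt_of_ne hne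
  set A : Set S := {x | ReflTransGen (AlternatingStep R δ) x₀ x}
  have hsat : ∀ y ∈ relImage R A, ∑ x, δ x y = ν y := by
    rintro y ⟨x, hx, hxy⟩
    by_contra hne'
    obtain ⟨δ', hδ', hlt⟩ := exists_sum_lt_of_reflTransGen hx hδ (fun _ _ => id) hrow hxy
      ((hδ.colSum_le y).lt_of_ne hne')
    exact (hmax hδ').not_gt hlt
  have hvanish : ∀ y ∈ relImage R A, ∀ x ∉ A, δ x y = 0 := by
    rintro y ⟨x', hx', hR⟩ x hx
    exact le_antisymm (not_lt.1 fun hpos => hx (hx'.tail ⟨y, hR, hpos⟩)) (hδ.nonneg x y)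
  have hL' := hL A
  rw [mass_eq_sum_filter, mass_eq_sum_filter, add_zero] at hL'
  refine hL'.not_gt ?_
  calc ∑ y with y ∈ relImage R A, ν y
      = ∑ y with y ∈ relImage R A, ∑ x with x ∈ A, δ x y := by
        refine sum_congr rfl fun y hy => ?_
        rw [← hsat y (mem_filter.1 hy).2, sum_filter_of_ne fun x _ h => ?_]
        by_contra hx
        exact h (hvanish y (mem_filter.1 hy).2 x hx)
    _ = ∑ x with x ∈ A, ∑ y with y ∈ relImage R A, δ x y := sum_comm
    _ ≤ ∑ x with x ∈ A, ∑ y, δ x y :=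
        sum_le_sum fun x _ => sum_le_sum_of_subset_of_nonneg (subset_univ _)
          fun y _ _ => hδ.nonneg x y
    _ < ∑ x with x ∈ A, μ x :=
        sum_lt_sum (fun x _ => hδ.rowSum_le x) ⟨x₀, mem_filter.2 ⟨mem_univ _, .refl⟩, hrow⟩

end IsSubcoupling

lemma isClosed_setOf_isSubcoupling (R : S → S → Prop) (μ ν : S → ℝ) :
    IsClosed {δ | IsSubcoupling R μ ν δ} := by
  have : {δ | IsSubcoupling R μ ν δ} = {δ : S → S → ℝ | (∀ x y, 0 ≤ δ x y) ∧
      (∀ x y, ¬R x y → δ x y ≤ 0) ∧ (∀ x, ∑ y, δ x y ≤ μ x) ∧ (∀ y, ∑ x, δ x y ≤ ν y)} := by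
    ext δ
    exact ⟨fun h => ⟨h.1, fun x y hR => not_lt.1 (mt (h.2 x y) hR), h.3, h.4⟩,
      fun h => ⟨h.1, fun x y hpos => of_not_not fun hR => (h.2.1 x y hR).not_gt hpos,
        h.2.2.1, h.2.2.2⟩⟩
  simp only [this, Set.ofPred_and, Set.ofPred_forall]
  refine .inter ?_ (.inter ?_ (.inter ?_ ?_))
  · exact isClosed_iInter fun x => isClosed_iInter fun y =>
      isClosed_le continuous_const (by fun_prop)
  · exact isClosed_iInter fun x => isClosed_iInter fun y => isClosed_iInter fun _ =>
      isClosed_le (by fun_prop) continuous_const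
  · exact isClosed_iInter fun x => isClosed_le (by fun_prop) continuous_const
  · exact isClosed_iInter fun y => isClosed_le (by fun_prop) continuous_const

lemma isCompact_setOf_isSubcoupling (R : S → S → Prop) (μ ν : S → ℝ) :
    IsCompact {δ | IsSubcoupling R μ ν δ} :=
  (isCompact_univ_pi fun x => isCompact_univ_pi fun _ => isCompact_Icc (a := 0) (b := μ x))
    |>.of_isClosed_subset (isClosed_setOf_isSubcoupling R μ ν)
      fun _ hδ x _ y _ => ⟨hδ.nonneg x y, hδ.le_left x y⟩

lemma exists_isSubcoupling_rowSum_eq_of_lift {R : S → S → Prop} {μ ν : S → ℝ}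
    (hμ : ∀ x, 0 ≤ μ x) (hν : ∀ y, 0 ≤ ν y) (hL : Lift 0 R μ ν) :
    ∃ δ, IsSubcoupling R μ ν δ ∧ ∀ x, ∑ y, δ x y = μ x := by
  have hzero : IsSubcoupling R μ ν 0 :=
    ⟨fun _ _ => le_rfl, fun _ _ h => (lt_irrefl _ h).elim, by simpa using hμ, by simpa using hν⟩
  obtain ⟨δ, hδ, hmax⟩ := (isCompact_setOf_isSubcoupling R μ ν).exists_isMaxOn ⟨0, hzero⟩
    (by fun_prop : Continuous fun δ : S → S → ℝ => ∑ p, ∑ q, δ p q).continuousOn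
  exact ⟨δ, hδ, hδ.rowSum_eq_of_isMaxOn hmax hL⟩

lemma lift_zero_iff_exists_weight {R : S → S → Prop} {μ ν : S → ℝ} (hμ : IsSubdist μ)
    (hν : ∀ y, 0 ≤ ν y) :
    Lift 0 R μ ν ↔ ∃ δ : S → S → ℝ,
      (∀ x y, 0 ≤ δ x y ∧ δ x y ≤ 1) ∧
      (∀ x y, 0 < δ x y → R x y) ∧
      (∀ x, ∑ y, δ x y = μ x) ∧
      (∀ y, ∑ x, δ x y ≤ ν y) := by
  constructor
  · intro hL
    obtain ⟨δ, hδ, hrow⟩ := exists_isSubcoupling_rowSum_eq_of_lift hμ.1 hν hL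
    exact ⟨δ, fun x y => ⟨hδ.nonneg x y, (hδ.le_left x y).trans (hμ.le_one x)⟩, hδ.rel_of_pos,
      hrow, hδ.colSum_le⟩
  · rintro ⟨δ, hbd, hR, hrow, hcol⟩
    exact IsSubcoupling.lift_zero ⟨fun x y => (hbd x y).1, hR, fun x => (hrow x).le, hcol⟩ hrow

end

/-- R is a 0-simulation iff it is a classical probabilistic simulation, defined
    via weight functions. -/
theorem zero_sim_iff_classical {S Act : Type*} [Fintype S]
    (D : S → Act → (S → ℝ) → Prop)
    (hD : ∀ s a μ, D s a μ → IsSubdist μ)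
    (R : S → S → Prop) :
    IsEpsSim D 0 R ↔
      (∀ s t, R s t → ∀ a μ, D s a μ → ∃ ν, D t a ν ∧
        ∃ δ : S → S → ℝ,
          (∀ x y, 0 ≤ δ x y ∧ δ x y ≤ 1) ∧
          (∀ x y, 0 < δ x y → R x y) ∧
          (∀ x, ∑ y, δ x y = μ x) ∧
          (∀ y, ∑ x, δ x y ≤ ν y)) := by
  refine forall₂_congr fun s t => forall_congr' fun _ => forall₃_congr fun a μ hs =>
    exists_congr fun ν => and_congr_right fun ht => ?_
  exact lift_zero_iff_exists_weight (hD s a μ hs) (hD t a ν ht).1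
end

section
/- Let (S, Act, D) be a finitely branching probabilistic automaton over a finite state space and ε ≥ 0. Define the decreasing sequence ≺_ε^0 = S × S and ≺_ε^{n+1} = F^ε(≺_ε^n). Then the largest ε-simulation ≺_ε equals the intersection ⋂_{n ∈ ℕ} ≺_ε^n. -/
/-! Relations on a finite set form a finite lattice, and `F^ε` is monotone on it (masses of
subdistributions grow with the set), so the decreasing iterates `≺^n` stabilise at some `≺^N`
with `≺^N = F^ε(≺^N)`: that relation is an ε-simulation containing `⋂ₙ ≺^n`. Conversely every
ε-simulation `R ⊆ F^ε(R)` lies below each iterate by induction on `n`. -/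

open Finset

/-- The functional F^ε on relations. -/
def Fsim {S Act : Type*} [Fintype S] (D : S → Act → (S → ℝ) → Prop) (ε : ℝ)
    (R : S → S → Prop) : S → S → Prop :=
  fun s t => ∀ a μ, D s a μ → ∃ ν, D t a ν ∧ Lift ε R μ ν

section Iteration

variable {α : Type*} [PartialOrder α] [OrderTop α] {F : α → α} {seq : ℕ → α}

theorem antitone_of_iterate (hF : Monotone F) (h0 : seq 0 = ⊤)
    (hsucc : ∀ n, seq (n + 1) = F (seq n)) : Antitone seq := by
  refine antitone_nat_of_succ_le fun n => ?_
  induction n with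
  | zero => exact h0 ▸ le_top
  | succ n ih => exact (hsucc (n + 1)).trans_le ((hF ih).trans_eq (hsucc n).symm)

theorem le_iterate_of_le_map (hF : Monotone F) (h0 : seq 0 = ⊤)
    (hsucc : ∀ n, seq (n + 1) = F (seq n)) {x : α} (hx : x ≤ F x) (n : ℕ) : x ≤ seq n := by
  induction n with
  | zero => exact h0 ▸ le_top
  | succ n ih => exact hsucc n ▸ hx.trans (hF ih)

theorem exists_iterate_le_map [WellFoundedLT α] (hF : Monotone F) (h0 : seq 0 = ⊤)
    (hsucc : ∀ n, seq (n + 1) = F (seq n)) : ∃ N, seq N ≤ F (seq N) := by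
  obtain ⟨N, hN⟩ := WellFoundedLT.antitone_chain_condition (antitone_of_iterate hF h0 hsucc)
  exact ⟨N, (hN (N + 1) N.le_succ).trans_le (hsucc N).le⟩

end Iteration

theorem mass_mono {S : Type*} [Fintype S] {μ : S → ℝ} (hμ : ∀ s, 0 ≤ μ s)
    {E F : Set S} (h : E ⊆ F) : mass μ E ≤ mass μ F :=
  Finset.sum_le_sum fun s _ => Set.indicator_le_indicator_of_subset h hμ s

theorem relImage_mono {S T : Type*} {R R' : S → T → Prop} (h : R ≤ R') (E : Set S) :
    relImage R E ⊆ relImage R' E :=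
  fun _ ⟨x, hx, hxy⟩ => ⟨x, hx, h x _ hxy⟩

theorem Lift.mono {S : Type*} [Fintype S] {ε : ℝ} {R R' : S → S → Prop} {μ ν : S → ℝ}
    (hν : ∀ s, 0 ≤ ν s) (h : R ≤ R') (hl : Lift ε R μ ν) : Lift ε R' μ ν := fun E =>
  (hl E).trans (add_le_add_left (mass_mono hν (relImage_mono h E)) ε)

theorem fsim_mono {S Act : Type*} [Fintype S] {D : S → Act → (S → ℝ) → Prop} {ε : ℝ}
    (hD : ∀ s a ν, D s a ν → ∀ x, 0 ≤ ν x) : Monotone (Fsim D ε) :=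
  fun _ _ hRR' _ t hst a μ hμ =>
    let ⟨ν, hν, hl⟩ := hst a μ hμ
    ⟨ν, hν, hl.mono (hD t a ν hν) hRR'⟩

theorem sim_eq_iInter_iterates_general {S Act : Type*} [Fintype S]
    (D : S → Act → (S → ℝ) → Prop)
    (hD : ∀ s a μ, D s a μ → IsSubdist μ)
    (ε : ℝ)
    (seq : ℕ → S → S → Prop)
    (h0 : ∀ s t, seq 0 s t)
    (hsucc : ∀ n, seq (n + 1) = Fsim D ε (seq n)) :
    ∀ s t : S, (∃ R, IsEpsSim D ε R ∧ R s t) ↔ ∀ n, seq n s t := by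
  have hF : Monotone (Fsim D ε) := fsim_mono fun s a μ hμ => (hD s a μ hμ).1
  have h0' : seq 0 = ⊤ := funext₂ fun s t => eq_true (h0 s t)
  -- `IsEpsSim D ε R` is by definition the post-fixed-point condition `R ≤ Fsim D ε R`.
  obtain ⟨N, hN⟩ := exists_iterate_le_map hF h0' hsucc
  intro s t
  constructor
  · rintro ⟨R, hR, hst⟩ n
    exact le_iterate_of_le_map hF h0' hsucc hR n s t hst
  · exact fun hst => ⟨seq N, hN, hst N⟩

/-- The largest ε-simulation equals the intersection of the iterates
    ≺_ε^0 = S × S, ≺_ε^{n+1} = F^ε(≺_ε^n). -/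
theorem sim_eq_iInter_iterates {S Act : Type*} [Fintype S]
    (D : S → Act → (S → ℝ) → Prop)
    (hD : ∀ s a μ, D s a μ → IsSubdist μ)
    (hfb : ∀ s a, {μ | D s a μ}.Finite)
    (ε : ℝ) (hε : 0 ≤ ε)
    (seq : ℕ → S → S → Prop)
    (h0 : ∀ s t, seq 0 s t)
    (hsucc : ∀ n, seq (n + 1) = Fsim D ε (seq n)) :
    ∀ s t : S, (∃ R, IsEpsSim D ε R ∧ R s t) ↔ ∀ n, seq n s t :=
  sim_eq_iInter_iterates_general D hD ε seq h0 hsucc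
end
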